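/- Let D be a self-adjoint operator on H and a ∈ B(H). If there exist a constant c > 0 and a sequence t_k ↓ 0 such that ‖e^{i t_k D} a e^{-i t_k D} − a‖ ≤ c t_k for all k, then a is weakly D-differentiable and ‖wD(a)‖ ≤ c. -/

import Mathlib

/-!
For `ξ, η` in the domain of `D`, the function `s ↦ ⟪α_s(a) ξ, η⟫ = ⟪a e^{-isD} ξ, e^{-isD} η⟫` is
differentiable at `0` with derivative `-i (⟪aξ, Dη⟫ - ⟪aDξ, η⟫)`. Its difference quotients along
`t_k` are bounded by `c ‖ξ‖ ‖η‖`, hence so is the commutator form on the dense domain of `D`.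
A bounded sesquilinear form on a dense subspace extends to the whole space, and the Riesz
representation turns the extension into an operator of norm at most `c`.
-/

open Complex Filter Topology MeasureTheory
open scoped Topology

local notation "⟪" x ", " y "⟫" => @inner ℂ _ _ x y

variable {H : Type*} [NormedAddCommGroup H] [InnerProductSpace ℂ H] [CompleteSpace H]

/-- `b` is the bounded operator implementing the commutator form
`(ξ, η) ↦ ⟨aξ, Dη⟩ − ⟨aDξ, η⟩` on `dom D × dom D`; i.e. `a` is weakly `D`-differentiable
with derivative `wD(a) = b`. -/
def IsWeakDeriv (D : H →ₗ.[ℂ] H) (a b : H →L[ℂ] H) : Prop :=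
  ∀ ξ η : D.domain, ⟪b (ξ : H), (η : H)⟫ = ⟪a (ξ : H), D η⟫ - ⟪a (D ξ), (η : H)⟫

/-- `conjAd U t a = U t ∘ a ∘ U (−t)`, i.e. `α_t(a) = e^{itD} a e^{-itD}`. -/
noncomputable def conjAd (U : ℝ → H →L[ℂ] H) (t : ℝ) (a : H →L[ℂ] H) : H →L[ℂ] H :=
  (U t).comp (a.comp (U (-t)))

/-- `U` is the strongly continuous one-parameter unitary group `t ↦ e^{itD}`
generated by the self-adjoint operator `D` (Stone's theorem characterization). -/
structure IsStoneGroupOf (D : H →ₗ.[ℂ] H) (U : ℝ → H →L[ℂ] H) : Prop where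
  map_zero : U 0 = 1
  map_add : ∀ s t : ℝ, U (s + t) = (U s).comp (U t)
  isometry : ∀ (t : ℝ) (ξ : H), ‖U t ξ‖ = ‖ξ‖
  hasDerivAt : ∀ ξ : D.domain, HasDerivAt (fun t : ℝ => U t (ξ : H)) (Complex.I • D ξ) 0
  mem_domain : ∀ ξ v : H, HasDerivAt (fun t : ℝ => U t ξ) v 0 → ξ ∈ D.domain

section DenseExtension

variable {𝕜 E F : Type*} [RCLike 𝕜] [NormedAddCommGroup E] [NormedSpace 𝕜 E]
  [NormedAddCommGroup F] [NormedSpace 𝕜 F] [CompleteSpace F] {V : Submodule 𝕜 E}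

theorem Submodule.extend_subtypeL_apply_coe {σ : 𝕜 →+* 𝕜} (hV : Dense (V : Set E))
    (f : V →SL[σ] F) (x : V) : f.extend V.subtypeL x = f x :=
  f.extend_eq hV.denseRange_val isUniformEmbedding_subtype_val.isUniformInducing x

theorem Submodule.opNorm_extend_subtypeL_le {σ : 𝕜 →+* 𝕜} [RingHomIsometric σ]
    (hV : Dense (V : Set E)) (f : V →SL[σ] F) : ‖f.extend V.subtypeL‖ ≤ ‖f‖ := by
  simpa using f.opNorm_extend_le (N := 1) hV.denseRange_val (by simp)

noncomputable def Submodule.extendL (hV : Dense (V : Set E)) :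
    (V →L[𝕜] F) →L[𝕜] (E →L[𝕜] F) :=
  LinearMap.mkContinuous
    { toFun := fun f => f.extend V.subtypeL
      map_add' := fun f g => by
        refine ContinuousLinearMap.extend_unique _ hV.denseRange_val
          isUniformEmbedding_subtype_val.isUniformInducing _ ?_
        ext x
        simp [Submodule.extend_subtypeL_apply_coe hV]
      map_smul' := fun m f => by
        refine ContinuousLinearMap.extend_unique _ hV.denseRange_val
          isUniformEmbedding_subtype_val.isUniformInducing _ ?_
        ext x
        simp [Submodule.extend_subtypeL_apply_coe hV] }
    1 (fun f => by simpa using Submodule.opNorm_extend_subtypeL_le hV f)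

theorem Submodule.extendL_apply_coe (hV : Dense (V : Set E)) (f : V →L[𝕜] F) (x : V) :
    Submodule.extendL hV f x = f x :=
  Submodule.extend_subtypeL_apply_coe hV f x

theorem Submodule.opNorm_extendL_le (hV : Dense (V : Set E)) :
    ‖(Submodule.extendL hV : (V →L[𝕜] F) →L[𝕜] (E →L[𝕜] F))‖ ≤ 1 :=
  LinearMap.mkContinuous_norm_le _ zero_le_one _

end DenseExtension

section Representation

open InnerProductSpace

variable {𝕜 E : Type*} [RCLike 𝕜] [NormedAddCommGroup E] [InnerProductSpace 𝕜 E] [CompleteSpace E]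

theorem InnerProductSpace.norm_continuousLinearMapOfBilin_le (B : E →L⋆[𝕜] E →L[𝕜] 𝕜) :
    ‖continuousLinearMapOfBilin B‖ ≤ ‖B‖ :=
  ((toDual 𝕜 E).symm.toLinearIsometry.norm_toContinuousLinearMap_comp).le

theorem exists_inner_eq_of_dense {V : Submodule 𝕜 E} (hV : Dense (V : Set E))
    (B : V →ₗ⋆[𝕜] V →ₗ[𝕜] 𝕜) {C : ℝ} (hC : 0 ≤ C) (hB : ∀ ξ η, ‖B ξ η‖ ≤ C * ‖ξ‖ * ‖η‖) :
    ∃ b : E →L[𝕜] E, ‖b‖ ≤ C ∧ ∀ ξ η : V, inner 𝕜 (b ξ) (η : E) = B ξ η := by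
  set B' := B.mkContinuous₂ C hB
  set B₂ := ((Submodule.extendL hV).comp B').extend V.subtypeL
  refine ⟨continuousLinearMapOfBilin B₂, ?_, fun ξ η => ?_⟩
  · calc ‖continuousLinearMapOfBilin B₂‖ ≤ ‖B₂‖ := norm_continuousLinearMapOfBilin_le B₂
      _ ≤ ‖(Submodule.extendL hV).comp B'‖ := Submodule.opNorm_extend_subtypeL_le hV _
      _ ≤ 1 * ‖B'‖ := (ContinuousLinearMap.opNorm_comp_le _ _).trans
          (by gcongr; exact Submodule.opNorm_extendL_le hV)
      _ ≤ C := by simpa using B.mkContinuous₂_norm_le hC hB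
  · simp [B₂, Submodule.extend_subtypeL_apply_coe hV, Submodule.extendL_apply_coe hV, B']

end Representation

theorem HasDerivAt.norm_le_of_norm_sub_le {F : Type*} [NormedAddCommGroup F] [NormedSpace ℝ F]
    {f : ℝ → F} {d : F} {x : ℝ} (hf : HasDerivAt f d x) {ι : Type*} {l : Filter ι} [l.NeBot]
    {t : ι → ℝ} (ht : Tendsto t l (𝓝[>] 0)) {C : ℝ}
    (hC : ∀ᶠ k in l, ‖f (x + t k) - f x‖ ≤ C * t k) : ‖d‖ ≤ C := by
  have hslope : Tendsto (fun k => (t k)⁻¹ • (f (x + t k) - f x)) l (𝓝 d) :=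
    (hasDerivAt_iff_tendsto_slope_zero.mp hf).comp (ht.mono_right (nhdsGT_le_nhdsNE 0))
  refine le_of_tendsto hslope.norm ?_
  filter_upwards [hC, ht.eventually self_mem_nhdsWithin] with k hk htk
  rw [norm_smul, norm_inv, Real.norm_of_nonneg (le_of_lt htk), inv_mul_le_iff₀ htk, mul_comm]
  exact hk

section Commutator

variable {H : Type*} [NormedAddCommGroup H] [InnerProductSpace ℂ H]

noncomputable def commutatorForm (D : H →ₗ.[ℂ] H) (a : H →L[ℂ] H) :
    D.domain →ₗ⋆[ℂ] D.domain →ₗ[ℂ] ℂ :=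
  LinearMap.mk₂'ₛₗ (starRingEnd ℂ) (RingHom.id ℂ)
    (fun ξ η => ⟪a (ξ : H), D η⟫ - ⟪a (D ξ), (η : H)⟫)
    (fun _ _ _ => by simp only [Submodule.coe_add, D.map_add, map_add, inner_add_left]; ring)
    (fun _ _ _ => by
      simp only [Submodule.coe_smul, D.map_smul, map_smul, inner_smul_left, smul_eq_mul]; ring)
    (fun _ _ _ => by simp only [Submodule.coe_add, D.map_add, inner_add_right]; ring)
    (fun _ _ _ => by
      simp only [Submodule.coe_smul, D.map_smul, inner_smul_right, RingHom.id_apply,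
        smul_eq_mul]; ring)

theorem isWeakDeriv_iff_inner_eq_commutatorForm {D : H →ₗ.[ℂ] H} {a b : H →L[ℂ] H} :
    IsWeakDeriv D a b ↔ ∀ ξ η : D.domain, ⟪b ξ, (η : H)⟫ = commutatorForm D a ξ η :=
  Iff.rfl

namespace IsStoneGroupOf

variable {D : H →ₗ.[ℂ] H} {U : ℝ → H →L[ℂ] H}

theorem apply_apply_neg (hU : IsStoneGroupOf D U) (s : ℝ) (y : H) : U s (U (-s) y) = y := by
  rw [← ContinuousLinearMap.comp_apply, ← hU.map_add, add_neg_cancel, hU.map_zero,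
    one_apply_eq_self]

theorem inner_map_map (hU : IsStoneGroupOf D U) (s : ℝ) (x y : H) :
    ⟪U s x, U s y⟫ = ⟪x, y⟫ :=
  (LinearIsometry.mk ((U s) : H →ₗ[ℂ] H) (hU.isometry s)).inner_map_map x y

theorem inner_apply_left (hU : IsStoneGroupOf D U) (s : ℝ) (x y : H) :
    ⟪U s x, y⟫ = ⟪x, U (-s) y⟫ := by
  conv_lhs => rw [← hU.apply_apply_neg s y, hU.inner_map_map]

theorem conjAd_zero (hU : IsStoneGroupOf D U) (a : H →L[ℂ] H) : conjAd U 0 a = a := by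
  ext x
  simp [conjAd, hU.map_zero]

theorem inner_conjAd_apply (hU : IsStoneGroupOf D U) (s : ℝ) (a : H →L[ℂ] H) (x y : H) :
    ⟪conjAd U s a x, y⟫ = ⟪a (U (-s) x), U (-s) y⟫ :=
  hU.inner_apply_left s _ y

theorem hasDerivAt_apply_neg (hU : IsStoneGroupOf D U) (ξ : D.domain) :
    HasDerivAt (fun s : ℝ => U (-s) (ξ : H)) (-(I • D ξ)) 0 := by
  simpa using (HasDerivAt.comp_const_sub (0 : ℝ) 0 (by simpa using hU.hasDerivAt ξ))

theorem hasDerivAt_inner_conjAd (hU : IsStoneGroupOf D U) (a : H →L[ℂ] H) (ξ η : D.domain) :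
    HasDerivAt (fun s : ℝ => ⟪conjAd U s a ξ, η⟫) (-I * commutatorForm D a ξ η) 0 := by
  have ha : HasDerivAt (fun s : ℝ => a (U (-s) (ξ : H))) (a (-(I • D ξ))) 0 :=
    (a.restrictScalars ℝ).hasFDerivAt.comp_hasDerivAt 0 (hU.hasDerivAt_apply_neg ξ)
  simp_rw [hU.inner_conjAd_apply]
  refine (ha.inner ℂ (hU.hasDerivAt_apply_neg η)).congr_deriv ?_
  simp only [commutatorForm, LinearMap.mk₂'ₛₗ_apply, neg_zero, hU.map_zero, one_apply_eq_self,
    map_neg, map_smul, inner_neg_right, inner_neg_left, inner_smul_right, inner_smul_left, conj_I]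
  ring

theorem norm_commutatorForm_le (hU : IsStoneGroupOf D U) {a : H →L[ℂ] H} {c : ℝ}
    {ι : Type*} {l : Filter ι} [l.NeBot] {t : ι → ℝ} (ht : Tendsto t l (𝓝[>] 0))
    (hb : ∀ k, ‖conjAd U (t k) a - a‖ ≤ c * t k) (ξ η : D.domain) :
    ‖commutatorForm D a ξ η‖ ≤ c * ‖ξ‖ * ‖η‖ := by
  have hderiv := (hU.hasDerivAt_inner_conjAd a ξ η).norm_le_of_norm_sub_le ht
    (C := c * ‖ξ‖ * ‖η‖) (Eventually.of_forall fun k => ?_)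
  · rwa [norm_mul, norm_neg, norm_I, one_mul] at hderiv
  rw [zero_add, hU.conjAd_zero, ← inner_sub_left, ← sub_apply]
  calc _ ≤ ‖conjAd U (t k) a - a‖ * ‖(ξ : H)‖ * ‖(η : H)‖ :=
        (norm_inner_le_norm _ _).trans (by gcongr; exact ContinuousLinearMap.le_opNorm _ _)
    _ ≤ c * t k * ‖(ξ : H)‖ * ‖(η : H)‖ := by gcongr; exact hb k
    _ = c * ‖ξ‖ * ‖η‖ * t k := by rw [Submodule.coe_norm, Submodule.coe_norm]; ring

end IsStoneGroupOf

end Commutator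

theorem isWeakDeriv_of_lipschitz_along_sequence_general
    (D : H →ₗ.[ℂ] H) (hD : IsSelfAdjoint D)
    (U : ℝ → H →L[ℂ] H) (hU : IsStoneGroupOf D U)
    (a : H →L[ℂ] H) (c : ℝ) (hc : 0 < c)
    (t : ℕ → ℝ) (ht0 : ∀ k, 0 < t k)
    (htlim : Tendsto t atTop (𝓝 0))
    (hb : ∀ k, ‖conjAd U (t k) a - a‖ ≤ c * t k) :
    ∃ b : H →L[ℂ] H, IsWeakDeriv D a b ∧ ‖b‖ ≤ c := by
  have ht : Tendsto t atTop (𝓝[>] 0) :=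
    tendsto_nhdsWithin_iff.mpr ⟨htlim, Eventually.of_forall ht0⟩
  obtain ⟨b, hb_norm, hb_inner⟩ := exists_inner_eq_of_dense hD.dense_domain
    (commutatorForm D a) hc.le (hU.norm_commutatorForm_le ht hb)
  exact ⟨b, isWeakDeriv_iff_inner_eq_commutatorForm.mpr hb_inner, hb_norm⟩

/-- If `‖α_{t_k}(a) − a‖ ≤ c t_k` along some sequence `t_k ↓ 0` then `a` is
weakly `D`-differentiable with `‖wD(a)‖ ≤ c`. -/
theorem isWeakDeriv_of_lipschitz_along_sequence
    (D : H →ₗ.[ℂ] H) (hD : IsSelfAdjoint D)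
    (U : ℝ → H →L[ℂ] H) (hU : IsStoneGroupOf D U)
    (a : H →L[ℂ] H) (c : ℝ) (hc : 0 < c)
    (t : ℕ → ℝ) (ht0 : ∀ k, 0 < t k) (htanti : StrictAnti t)
    (htlim : Tendsto t atTop (𝓝 0))
    (hb : ∀ k, ‖conjAd U (t k) a - a‖ ≤ c * t k) :
    ∃ b : H →L[ℂ] H, IsWeakDeriv D a b ∧ ‖b‖ ≤ c :=
  isWeakDeriv_of_lipschitz_along_sequence_general D hD U hU a c hc t ht0 htlim hb
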